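/- Define the Concentratable Entanglement of an n-qubit pure state |ψ⟩ as C(|ψ⟩) = 1 − (1/2ⁿ) Σ_{α ⊆ {1,…,n}} Tr(ρ_α²), where ρ_α is the reduced state on the qubits in α (with the convention Tr(ρ_∅²) = 1). Then for any two n-qubit pure states ψ = |ψ⟩⟨ψ| and φ = |φ⟩⟨φ|, |C(|ψ⟩) − C(|φ⟩)| ≤ (4 − 2^{3−n}) |ψ − φ|_tr, where |A − B|_tr = ½ Tr √((A−B)†(A−B)) is the trace distance. -/

import Mathlib

open Matrix BigOperators Complex
open scoped ComplexOrder

noncomputable section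

/-- Frobenius (Hilbert–Schmidt) norm `‖X‖₂ = √(Tr(XᴴX))`. -/
def frobNorm {m : Type*} [Fintype m] (X : Matrix m m ℂ) : ℝ :=
  Real.sqrt ((Xᴴ * X).trace.re)

/-- Trace norm (Schatten 1-norm) `‖X‖₁ = Tr √(XᴴX)`. -/
def traceNorm {m : Type*} [Fintype m] [DecidableEq m] (X : Matrix m m ℂ) : ℝ :=
  (((Matrix.posSemidef_conjTranspose_mul_self X).1.eigenvectorUnitary.1 *
      diagonal (((↑) : ℝ → ℂ) ∘ Real.sqrt ∘ (Matrix.posSemidef_conjTranspose_mul_self X).1.eigenvalues) *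
      (star (Matrix.posSemidef_conjTranspose_mul_self X).1.eigenvectorUnitary :
        Matrix m m ℂ)).trace).re

/-- Trace distance `|ρ − σ|_tr = ½‖ρ − σ‖₁`. -/
def traceDist {m : Type*} [Fintype m] [DecidableEq m] (ρ σ : Matrix m m ℂ) : ℝ :=
  traceNorm (ρ - σ) / 2

/-- Purity `Tr(ρ²)` (real part). -/
def purity {m : Type*} [Fintype m] (ρ : Matrix m m ℂ) : ℝ := ((ρ * ρ).trace).re

/-- Outer product `|ψ⟩⟨ψ|`. -/
def outer {m : Type*} (ψ : m → ℂ) : Matrix m m ℂ :=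
  Matrix.of fun a b => ψ a * star (ψ b)

/-- Partial trace over the second tensor factor. -/
def ptraceB {A B : Type*} [Fintype B] (M : Matrix (A × B) (A × B) ℂ) : Matrix A A ℂ :=
  Matrix.of fun a a' => ∑ b, M (a, b) (a', b)

/-- Partial trace over the first tensor factor. -/
def ptraceA {A B : Type*} [Fintype A] (M : Matrix (A × B) (A × B) ℂ) : Matrix B B ℂ :=
  Matrix.of fun b b' => ∑ a, M (a, b) (a, b')

/-- Index type of the `n`-qubit computational basis. -/
abbrev QIdx (n : ℕ) := Fin n → Fin 2

/-- Merge a bit assignment on `s` with one on its complement. -/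
def mergeOn {n : ℕ} (s : Finset (Fin n)) (f : {i // i ∈ s} → Fin 2)
    (g : {i // i ∉ s} → Fin 2) : QIdx n :=
  fun i => if h : i ∈ s then f ⟨i, h⟩ else g ⟨i, h⟩

/-- Reduced density matrix on the qubit subset `s` (partial trace over `sᶜ`). -/
def reduce {n : ℕ} (s : Finset (Fin n)) (ρ : Matrix (QIdx n) (QIdx n) ℂ) :
    Matrix ({i // i ∈ s} → Fin 2) ({i // i ∈ s} → Fin 2) ℂ :=
  Matrix.of fun f f' => ∑ g : {i // i ∉ s} → Fin 2, ρ (mergeOn s f g) (mergeOn s f' g)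

/-- Concentratable Entanglement `C(|ψ⟩) = 1 − 2⁻ⁿ Σ_{α⊆[n]} Tr(ρ_α²)`. -/
def CE {n : ℕ} (ψ : QIdx n → ℂ) : ℝ :=
  1 - (1 / 2 ^ n) * ∑ s : Finset (Fin n), purity (reduce s (outer ψ))

end
/-!
Write `ρ_s = M Mᴴ`, where `M` is `ψ` reshaped into an `s × sᶜ` coefficient matrix, so that
`Tr ρ_s² = ‖M Mᴴ‖₂²` (Frobenius norm). The identity
`M Mᴴ - N Nᴴ = ½ ((M - N)(M + N)ᴴ + (M + N)(M - N)ᴴ)` gives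
`|Tr ρ_s² - Tr σ_s²| ≤ 2 ‖ψ - φ‖ ‖ψ + φ‖`, and after fixing the global phase of `φ` so that
`⟨ψ|φ⟩ ≥ 0` the right-hand side is `4 √(1 - |⟨ψ|φ⟩|²)`.
On the other side, `Δ = |ψ⟩⟨ψ| - |φ⟩⟨φ|` satisfies `Δ³ = (1 - |⟨ψ|φ⟩|²) Δ`, hence
`|Δ| = Δ² / √(1 - |⟨ψ|φ⟩|²)` and the trace distance is exactly `√(1 - |⟨ψ|φ⟩|²)`.
The terms `α = ∅` and `α = [n]` of the two sums agree, which leaves `2ⁿ - 2` terms, each at most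
four times the trace distance.
-/

open Matrix WithLp
open scoped InnerProductSpace ComplexConjugate

theorem sub_pow_three_of_isIdempotentElem {R A : Type*} [CommRing R] [Ring A] [Algebra R A]
    {p q : A} (hp : IsIdempotentElem p) (hq : IsIdempotentElem q) {r : R}
    (hpqp : p * q * p = r • p) (hqpq : q * p * q = r • q) :
    (p - q) ^ 3 = (1 - r) • (p - q) := by
  calc (p - q) ^ 3 = p * p * p - p * p * q - p * q * p + p * (q * q)
        - q * (p * p) + q * p * q + q * q * p - q * q * q := by noncomm_ring
    _ = p - q - p * q * p + q * p * q := by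
        rw [hp.eq, hp.eq, hq.eq, hq.eq]; abel
    _ = (1 - r) • (p - q) := by
        rw [hpqp, hqpq, sub_smul, one_smul, smul_sub]; abel

theorem norm_sub_mul_norm_add_of_norm_eq_one {𝕜 E : Type*} [RCLike 𝕜] [NormedAddCommGroup E]
    [InnerProductSpace 𝕜 E] {x y : E} (hx : ‖x‖ = 1) (hy : ‖y‖ = 1) :
    ‖x - y‖ * ‖x + y‖ = 2 * √(1 - RCLike.re ⟪x, y⟫_𝕜 ^ 2) := by
  rw [← Real.sqrt_sq (by positivity : 0 ≤ ‖x - y‖ * ‖x + y‖), mul_pow, @norm_sub_sq 𝕜,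
    @norm_add_sq 𝕜, hx, hy, show (2 : ℝ) = √(2 ^ 2) by simp, ← Real.sqrt_mul (by positivity)]
  congr 1
  ring

theorem abs_sum_le_of_eq_zero_of_eq_zero {α : Type*} [Fintype α] [DecidableEq α] {f : α → ℝ}
    {a b : α} (hab : a ≠ b) (ha : f a = 0) (hb : f b = 0) {B : ℝ} (hB : ∀ x, |f x| ≤ B) :
    |∑ x, f x| ≤ (Fintype.card α - 2) * B := by
  have hsub : {a, b} ⊆ (Finset.univ : Finset α) := Finset.subset_univ _
  rw [← Finset.sum_sdiff hsub, Finset.sum_pair hab, ha, hb, add_zero, add_zero]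
  calc |∑ x ∈ Finset.univ \ {a, b}, f x| ≤ ∑ x ∈ Finset.univ \ {a, b}, |f x| :=
        Finset.abs_sum_le_sum_abs _ _
    _ ≤ (Finset.univ \ {a, b}).card • B := Finset.sum_le_card_nsmul _ _ _ fun x _ => hB x
    _ = (Fintype.card α - 2) * B := by
        rw [Finset.card_sdiff_of_subset hsub, Finset.card_pair hab, nsmul_eq_mul,
          Nat.cast_sub (by simpa [Finset.card_pair hab] using Finset.card_le_card hsub)]
        simp

section Outer

variable {m : Type*}

theorem outer_eq_vecMulVec (ψ : m → ℂ) : outer ψ = vecMulVec ψ (star ψ) := rfl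

theorem outer_smul_of_norm_eq_one {ω : ℂ} (hω : ‖ω‖ = 1) (φ : m → ℂ) :
    outer (ω • φ) = outer φ := by
  have hωω : ω * conj ω = 1 := by rw [RCLike.mul_conj, hω]; simp
  ext a b
  simp only [outer, of_apply, Pi.smul_apply, smul_eq_mul, star_mul', Complex.star_def]
  linear_combination (φ a * conj (φ b)) * hωω

variable [Fintype m]

theorem vecMulVec_star_mul_vecMulVec_star (ψ φ χ ω : m → ℂ) :
    vecMulVec ψ (star φ) * vecMulVec χ (star ω) =
      ⟪toLp 2 φ, toLp 2 χ⟫_ℂ • vecMulVec ψ (star ω) := by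
  rw [vecMulVec_mul_vecMulVec, vecMulVec_smul, EuclideanSpace.inner_toLp_toLp, dotProduct_comm]

theorem isIdempotentElem_outer {ψ : m → ℂ} (hψ : ‖toLp 2 ψ‖ = 1) :
    IsIdempotentElem (outer ψ) := by
  rw [IsIdempotentElem, outer_eq_vecMulVec, vecMulVec_star_mul_vecMulVec_star,
    inner_self_eq_norm_sq_to_K, hψ]
  simp

theorem outer_mul_outer_mul_outer (ψ φ : m → ℂ) :
    outer ψ * outer φ * outer ψ = (‖⟪toLp 2 ψ, toLp 2 φ⟫_ℂ‖ ^ 2 : ℝ) • outer ψ := by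
  rw [outer_eq_vecMulVec, outer_eq_vecMulVec, vecMulVec_star_mul_vecMulVec_star, smul_mul_assoc,
    vecMulVec_star_mul_vecMulVec_star, smul_smul, ← inner_conj_symm (toLp 2 φ), RCLike.mul_conj,
    ← Complex.coe_smul]
  norm_cast

theorem trace_outer {ψ : m → ℂ} (hψ : ‖toLp 2 ψ‖ = 1) : (outer ψ).trace = 1 := by
  rw [outer_eq_vecMulVec, trace_vecMulVec, ← EuclideanSpace.inner_toLp_toLp,
    inner_self_eq_norm_sq_to_K, hψ]
  simp

theorem trace_outer_mul_outer (ψ φ : m → ℂ) :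
    (outer ψ * outer φ).trace = ((‖⟪toLp 2 ψ, toLp 2 φ⟫_ℂ‖ ^ 2 : ℝ) : ℂ) := by
  rw [outer_eq_vecMulVec, outer_eq_vecMulVec, vecMulVec_star_mul_vecMulVec_star, trace_smul,
    trace_vecMulVec, ← EuclideanSpace.inner_toLp_toLp, smul_eq_mul,
    ← inner_conj_symm (toLp 2 φ), RCLike.mul_conj]
  norm_cast

end Outer

section TraceNorm

open scoped MatrixOrder

variable {m : Type*} [Fintype m] [DecidableEq m]

theorem traceNorm_eq_re_trace_abs (X : Matrix m m ℂ) : traceNorm X = (CFC.abs X).trace.re := by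
  have hX := posSemidef_conjTranspose_mul_self X
  rw [CFC.abs, star_eq_conjTranspose, CFC.sqrt_eq_real_sqrt _ hX.nonneg, cfcₙ_eq_cfc,
    hX.1.cfc_eq, IsHermitian.cfc, Unitary.conjStarAlgAut_apply]
  rfl

-- For `s = 0` the hypothesis forces `A = 0`, so the junk value `0⁻¹ = 0` makes both sides vanish.
theorem Matrix.IsHermitian.abs_eq_inv_smul_sq {A : Matrix m m ℂ} (hA : A.IsHermitian) {s : ℝ}
    (hs : 0 ≤ s) (h : A ^ 3 = (s ^ 2 : ℝ) • A) : CFC.abs A = s⁻¹ • A ^ 2 := by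
  have hsq : A ^ 2 = Aᴴ * A := by rw [hA.eq, sq]
  rcases hs.eq_or_lt with rfl | hs
  · have hA3 : A ^ 3 = 0 := by simpa using h
    have hA2 : (A ^ 2)ᴴ * A ^ 2 = 0 := by
      rw [(hA.pow 2).eq, ← pow_add, show 2 + 2 = 1 + 3 by rfl, pow_add, hA3, mul_zero]
    rw [conjTranspose_mul_self_eq_zero, hsq, conjTranspose_mul_self_eq_zero] at hA2
    simp [hA2]
  · rw [CFC.abs, star_eq_conjTranspose, ← hsq]
    apply CFC.sqrt_unique _ (smul_nonneg (inv_nonneg.2 hs.le) ?_)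
    · rw [smul_mul_smul_comm, ← pow_add, show 2 + 2 = 1 + 3 by rfl, pow_add, h, pow_one,
        mul_smul_comm, smul_smul, ← sq, inv_pow, inv_mul_cancel₀ (by positivity), one_smul, sq]
    · rw [hsq]; exact (posSemidef_conjTranspose_mul_self A).nonneg

theorem traceNorm_outer_sub {ψ φ : m → ℂ} (hψ : ‖toLp 2 ψ‖ = 1) (hφ : ‖toLp 2 φ‖ = 1) :
    traceNorm (outer ψ - outer φ) = 2 * √(1 - ‖⟪toLp 2 ψ, toLp 2 φ⟫_ℂ‖ ^ 2) := by
  set c := ⟪toLp 2 ψ, toLp 2 φ⟫_ℂ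
  set s := √(1 - ‖c‖ ^ 2)
  have hc : ‖c‖ ≤ 1 := by
    simpa [hψ, hφ] using norm_inner_le_norm (𝕜 := ℂ) (toLp 2 ψ) (toLp 2 φ)
  have hs : s ^ 2 = 1 - ‖c‖ ^ 2 := Real.sq_sqrt (by nlinarith [norm_nonneg c])
  have hcube : (outer ψ - outer φ) ^ 3 = (s ^ 2 : ℝ) • (outer ψ - outer φ) := by
    rw [hs]
    refine sub_pow_three_of_isIdempotentElem (isIdempotentElem_outer hψ)
      (isIdempotentElem_outer hφ) (outer_mul_outer_mul_outer ψ φ) ?_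
    rw [outer_mul_outer_mul_outer, norm_inner_symm]
  have hherm : (outer ψ - outer φ).IsHermitian := by
    refine IsHermitian.sub ?_ ?_ <;> simp [IsHermitian, outer_eq_vecMulVec, conjTranspose_vecMulVec]
  have htr : ((outer ψ - outer φ) ^ 2).trace.re = 2 * s ^ 2 := by
    rw [sq, sub_mul, mul_sub, mul_sub, (isIdempotentElem_outer hψ).eq,
      (isIdempotentElem_outer hφ).eq, trace_sub, trace_sub, trace_sub, trace_outer hψ,
      trace_outer hφ, trace_outer_mul_outer, trace_outer_mul_outer,
      norm_inner_symm (toLp 2 φ), hs]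
    simp only [Complex.sub_re, Complex.one_re, Complex.ofReal_re]
    ring
  rw [traceNorm_eq_re_trace_abs, hherm.abs_eq_inv_smul_sq (Real.sqrt_nonneg _) hcube, trace_smul,
    Complex.real_smul, Complex.re_ofReal_mul, htr]
  change s⁻¹ * (2 * s ^ 2) = 2 * s
  rcases eq_or_ne s 0 with h0 | h0
  · simp [h0]
  · field_simp

end TraceNorm

section Purity

open scoped Matrix.Norms.Frobenius

variable {m k : Type*} [Fintype m] [Fintype k]

theorem Matrix.frobenius_norm_sq (A : Matrix m k ℂ) : ‖A‖ ^ 2 = ∑ i, ∑ j, ‖A i j‖ ^ 2 := by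
  rw [frobenius_norm_def, ← Real.sqrt_eq_rpow, Real.sq_sqrt (by positivity)]
  simp_rw [Real.rpow_two]

theorem Matrix.re_trace_conjTranspose_mul_self (A : Matrix m k ℂ) :
    (Aᴴ * A).trace.re = ‖A‖ ^ 2 := by
  rw [frobenius_norm_sq, Finset.sum_comm, trace, Complex.re_sum]
  refine Finset.sum_congr rfl fun j _ => ?_
  simp [mul_apply, Complex.re_sum, ← Complex.normSq_eq_norm_sq, Complex.normSq_apply]

theorem purity_eq_frobenius_norm_sq {R : Matrix m m ℂ} (hR : R.IsHermitian) :
    purity R = ‖R‖ ^ 2 := by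
  rw [purity, ← re_trace_conjTranspose_mul_self, hR.eq]

theorem purity_mul_conjTranspose_comm (M : Matrix m k ℂ) :
    purity (M * Mᴴ) = purity (Mᴴ * M) := by
  rw [purity, purity, ← Matrix.mul_assoc, trace_mul_comm]
  simp only [Matrix.mul_assoc]

theorem purity_mul_conjTranspose_of_unique [Unique m] (M : Matrix m k ℂ) :
    purity (M * Mᴴ) = ‖M‖ ^ 4 := by
  have hentry : (M * Mᴴ) default default = ((‖M‖ ^ 2 : ℝ) : ℂ) := by
    rw [frobenius_norm_sq, Fintype.sum_unique]
    simp [mul_apply, ← Complex.normSq_eq_norm_sq, Complex.mul_conj]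
  rw [purity, trace, Fintype.sum_unique, diag_apply, mul_apply, Fintype.sum_unique, hentry,
    ← Complex.ofReal_mul, Complex.ofReal_re]
  ring

theorem norm_mul_conjTranspose_sub_le (M N : Matrix m k ℂ) :
    ‖M * Mᴴ - N * Nᴴ‖ ≤ ‖M - N‖ * ‖M + N‖ := by
  have key : M * Mᴴ - N * Nᴴ = (2 : ℂ)⁻¹ • ((M - N) * (M + N)ᴴ + (M + N) * (M - N)ᴴ) := by
    simp only [conjTranspose_add, conjTranspose_sub, Matrix.mul_add, Matrix.mul_sub,
      Matrix.add_mul, Matrix.sub_mul]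
    module
  calc ‖M * Mᴴ - N * Nᴴ‖
      ≤ 2⁻¹ * (‖M - N‖ * ‖(M + N)ᴴ‖ + ‖M + N‖ * ‖(M - N)ᴴ‖) := by
        rw [key, norm_smul, norm_inv, Complex.norm_two]
        gcongr
        exact (norm_add_le _ _).trans
          (add_le_add (frobenius_norm_mul _ _) (frobenius_norm_mul _ _))
    _ = ‖M - N‖ * ‖M + N‖ := by
        rw [frobenius_norm_conjTranspose, frobenius_norm_conjTranspose]; ring

theorem norm_mul_conjTranspose_le_one {M : Matrix m k ℂ} (hM : ‖M‖ ≤ 1) : ‖M * Mᴴ‖ ≤ 1 :=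
  (frobenius_norm_mul M Mᴴ).trans <| by
    rw [frobenius_norm_conjTranspose]; nlinarith [norm_nonneg M]

theorem abs_purity_mul_conjTranspose_sub_le {M N : Matrix m k ℂ} (hM : ‖M‖ ≤ 1)
    (hN : ‖N‖ ≤ 1) : |purity (M * Mᴴ) - purity (N * Nᴴ)| ≤ 2 * (‖M - N‖ * ‖M + N‖) := by
  rw [purity_eq_frobenius_norm_sq (isHermitian_mul_conjTranspose_self M),
    purity_eq_frobenius_norm_sq (isHermitian_mul_conjTranspose_self N), sq_sub_sq, abs_mul]
  calc |‖M * Mᴴ‖ + ‖N * Nᴴ‖| * |‖M * Mᴴ‖ - ‖N * Nᴴ‖|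
      ≤ 2 * ‖M * Mᴴ - N * Nᴴ‖ := by
        gcongr
        · rw [abs_of_nonneg (by positivity)]
          linarith [norm_mul_conjTranspose_le_one hM, norm_mul_conjTranspose_le_one hN]
        · exact abs_norm_sub_norm_le _ _
    _ ≤ 2 * (‖M - N‖ * ‖M + N‖) := by gcongr; exact norm_mul_conjTranspose_sub_le M N

variable {n : ℕ}

def mergeOnEquiv (s : Finset (Fin n)) :
    (({i // i ∈ s} → Fin 2) × ({i // i ∉ s} → Fin 2)) ≃ QIdx n where
  toFun p := mergeOn s p.1 p.2
  invFun h := (fun i => h i, fun i => h i)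
  left_inv p := by ext i <;> simp [mergeOn, i.2]
  right_inv h := funext fun i => by by_cases hi : i ∈ s <;> simp [mergeOn, hi]

def coeffMatrix (s : Finset (Fin n)) (ψ : QIdx n → ℂ) :
    Matrix ({i // i ∈ s} → Fin 2) ({i // i ∉ s} → Fin 2) ℂ :=
  of fun f g => ψ (mergeOn s f g)

theorem coeffMatrix_sub (s : Finset (Fin n)) (ψ φ : QIdx n → ℂ) :
    coeffMatrix s (ψ - φ) = coeffMatrix s ψ - coeffMatrix s φ := rfl

theorem coeffMatrix_add (s : Finset (Fin n)) (ψ φ : QIdx n → ℂ) :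
    coeffMatrix s (ψ + φ) = coeffMatrix s ψ + coeffMatrix s φ := rfl

theorem reduce_outer (s : Finset (Fin n)) (ψ : QIdx n → ℂ) :
    reduce s (outer ψ) = coeffMatrix s ψ * (coeffMatrix s ψ)ᴴ := by
  ext f f'
  simp [reduce, outer, coeffMatrix, mul_apply]

theorem frobenius_norm_coeffMatrix (s : Finset (Fin n)) (ψ : QIdx n → ℂ) :
    ‖coeffMatrix s ψ‖ = ‖toLp 2 ψ‖ := by
  rw [← sq_eq_sq₀ (norm_nonneg _) (norm_nonneg _), frobenius_norm_sq, EuclideanSpace.norm_sq_eq,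
    ← (mergeOnEquiv s).sum_comp, Fintype.sum_prod_type]
  rfl

theorem purity_reduce_empty {ψ : QIdx n → ℂ} (hψ : ‖toLp 2 ψ‖ = 1) :
    purity (reduce ∅ (outer ψ)) = 1 := by
  rw [reduce_outer, purity_mul_conjTranspose_of_unique, frobenius_norm_coeffMatrix, hψ, one_pow]

theorem purity_reduce_univ {ψ : QIdx n → ℂ} (hψ : ‖toLp 2 ψ‖ = 1) :
    purity (reduce Finset.univ (outer ψ)) = 1 := by
  have : IsEmpty {i : Fin n // i ∉ Finset.univ} := ⟨fun i => i.2 (Finset.mem_univ _)⟩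
  have h := purity_mul_conjTranspose_of_unique (coeffMatrix Finset.univ ψ)ᴴ
  rwa [conjTranspose_conjTranspose, ← purity_mul_conjTranspose_comm, ← reduce_outer,
    frobenius_norm_conjTranspose, frobenius_norm_coeffMatrix, hψ, one_pow] at h

theorem abs_purity_reduce_outer_sub_le_norm_sub_mul_norm_add (s : Finset (Fin n))
    {ψ φ : QIdx n → ℂ} (hψ : ‖toLp 2 ψ‖ = 1) (hφ : ‖toLp 2 φ‖ = 1) :
    |purity (reduce s (outer ψ)) - purity (reduce s (outer φ))| ≤
      2 * (‖toLp 2 ψ - toLp 2 φ‖ * ‖toLp 2 ψ + toLp 2 φ‖) := by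
  rw [reduce_outer, reduce_outer, ← toLp_sub, ← toLp_add, ← frobenius_norm_coeffMatrix s,
    ← frobenius_norm_coeffMatrix s, coeffMatrix_sub, coeffMatrix_add]
  exact abs_purity_mul_conjTranspose_sub_le (by rw [frobenius_norm_coeffMatrix, hψ])
    (by rw [frobenius_norm_coeffMatrix, hφ])

end Purity

theorem abs_purity_reduce_outer_sub_le {n : ℕ} (s : Finset (Fin n)) {ψ φ : QIdx n → ℂ}
    (hψ : ‖toLp 2 ψ‖ = 1) (hφ : ‖toLp 2 φ‖ = 1) :
    |purity (reduce s (outer ψ)) - purity (reduce s (outer φ))| ≤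
      4 * √(1 - ‖⟪toLp 2 ψ, toLp 2 φ⟫_ℂ‖ ^ 2) := by
  obtain ⟨ω, hω, hωc⟩ := Complex.exists_norm_eq_mul_self ⟪toLp 2 ψ, toLp 2 φ⟫_ℂ
  have hωφ : ‖toLp 2 (ω • φ)‖ = 1 := by rw [toLp_smul, norm_smul, hω, hφ, one_mul]
  have hre : RCLike.re ⟪toLp 2 ψ, toLp 2 (ω • φ)⟫_ℂ = ‖⟪toLp 2 ψ, toLp 2 φ⟫_ℂ‖ := by
    rw [toLp_smul, inner_smul_right, ← hωc]
    simp
  calc |purity (reduce s (outer ψ)) - purity (reduce s (outer φ))|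
      = |purity (reduce s (outer ψ)) - purity (reduce s (outer (ω • φ)))| := by
        rw [outer_smul_of_norm_eq_one hω]
    _ ≤ 2 * (‖toLp 2 ψ - toLp 2 (ω • φ)‖ * ‖toLp 2 ψ + toLp 2 (ω • φ)‖) :=
        abs_purity_reduce_outer_sub_le_norm_sub_mul_norm_add s hψ hωφ
    _ = 4 * √(1 - ‖⟪toLp 2 ψ, toLp 2 φ⟫_ℂ‖ ^ 2) := by
        rw [norm_sub_mul_norm_add_of_norm_eq_one (𝕜 := ℂ) hψ hωφ, hre]
        ring

/-- Continuity of Concentratable Entanglement: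
`|C(ψ) − C(φ)| ≤ (4 − 2^{3−n}) |ψ − φ|_tr`. -/
theorem stmt_6 {n : ℕ} (hn : 1 ≤ n) (ψ φ : QIdx n → ℂ)
    (hψ : ∑ f, Complex.normSq (ψ f) = 1) (hφ : ∑ f, Complex.normSq (φ f) = 1) :
    |CE ψ - CE φ| ≤ (4 - (2 : ℝ) ^ ((3 : ℤ) - n)) * traceDist (outer ψ) (outer φ) := by
  have hψ' : ‖toLp 2 ψ‖ = 1 := by simp [EuclideanSpace.norm_eq, ← Complex.normSq_eq_norm_sq, hψ]
  have hφ' : ‖toLp 2 φ‖ = 1 := by simp [EuclideanSpace.norm_eq, ← Complex.normSq_eq_norm_sq, hφ]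
  set t := √(1 - ‖⟪toLp 2 ψ, toLp 2 φ⟫_ℂ‖ ^ 2)
  have hdist : traceDist (outer ψ) (outer φ) = t := by
    rw [traceDist, traceNorm_outer_sub hψ' hφ']; ring
  have hne : (∅ : Finset (Fin n)) ≠ Finset.univ :=
    (Finset.univ_nonempty_iff.2 ⟨⟨0, hn⟩⟩).ne_empty.symm
  have hsum := abs_sum_le_of_eq_zero_of_eq_zero
    (f := fun s => purity (reduce s (outer ψ)) - purity (reduce s (outer φ))) hne
    (by simp [purity_reduce_empty hψ', purity_reduce_empty hφ'])
    (by simp [purity_reduce_univ hψ', purity_reduce_univ hφ'])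
    fun s => abs_purity_reduce_outer_sub_le s hψ' hφ'
  rw [Fintype.card_finset, Fintype.card_fin, Finset.sum_sub_distrib] at hsum
  have hcoeff : (1 / 2 ^ n : ℝ) * ((2 ^ n - 2) * 4) = 4 - (2 : ℝ) ^ ((3 : ℤ) - n) := by
    rw [zpow_sub₀ two_ne_zero, zpow_natCast]
    field_simp
    ring
  calc |CE ψ - CE φ|
      = 1 / 2 ^ n * |∑ s, purity (reduce s (outer ψ)) - ∑ s, purity (reduce s (outer φ))| := by
        rw [CE, CE, sub_sub_sub_cancel_left, ← mul_sub, abs_mul, abs_of_pos (by positivity),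
          abs_sub_comm]
    _ ≤ 1 / 2 ^ n * ((2 ^ n - 2) * (4 * t)) := by gcongr; exact_mod_cast hsum
    _ = (4 - (2 : ℝ) ^ ((3 : ℤ) - n)) * traceDist (outer ψ) (outer φ) := by
        rw [hdist, ← hcoeff]; ring
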